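/- The leading monomial of the key polynomial κ_α with respect to the pure reverse lexicographic order ≺ is x^α, with coefficient 1; consequently the key polynomials {κ_α} form a ℤ-basis of the polynomial ring. -/

import Mathlib

/-!
Every exponent `β` of `κ_δ` obeys a Gale bound: for each set `S` of variables,
`∑_{k ∈ S} β_k ≤ ∑_{k ∈ T} δ_k` for some `T` of the same size obtained from `S` by
moving elements upwards. The exponents of `π_i x^β` lie on the `(i, i+1)`-string between `β` and
`s_i β`, so a subset sum changes at most into the sum over the swapped subset; and when
`δ_i < δ_{i+1}`, sets bounding for `δ ∘ s_i` can be traded for sets bounding for `δ`. Hence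
`π_i` preserves the bound. For `S = {m, …, n-1}` only `T = S` is Gale-above `S`, which gives
`β ≼ δ` in reverse lexicographic order; for `S = {i, i+2, …, n-1}` it forces `x^δ` in
`π_i κ_{s_i δ}` to come from `x^{s_i δ}` alone, with coefficient `1`. Unitriangularity with
respect to the well-order `≼` makes the key polynomials a basis.
-/

open MvPolynomial Classical

/-- The divided difference operator ∂ on ℤ[x_1,...,x_n] for the pair of variables
x_i, x_j (intended: j = i+1): ∂(f) = (f - s_{ij}·f)/(x_i - x_j), defined via choice
from the (always valid) divisibility of f - s_{ij}·f by x_i - x_j. -/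
noncomputable def ddiff (n : ℕ) (i j : Fin n) (f : MvPolynomial (Fin n) ℤ) :
    MvPolynomial (Fin n) ℤ :=
  if h : (X i - X j : MvPolynomial (Fin n) ℤ) ∣ (f - rename (Equiv.swap i j) f) then
    h.choose
  else 0

/-- The Demazure operator π_i(f) = ∂_i(x_i · f). -/
noncomputable def demazure (n : ℕ) (i j : Fin n) (f : MvPolynomial (Fin n) ℤ) :
    MvPolynomial (Fin n) ℤ :=
  ddiff n i j (X i * f)

/-- `IsKey n α f` holds iff f is the key polynomial κ_α:
κ_α = x^α for weakly decreasing α, and κ_α = π_i(κ_{α̂}) when α_i < α_{i+1}, where α̂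
exchanges the entries i, i+1 of α. -/
inductive IsKey (n : ℕ) : (Fin n → ℕ) → MvPolynomial (Fin n) ℤ → Prop where
  | decreasing (α : Fin n → ℕ) (h : ∀ i j : Fin n, i ≤ j → α j ≤ α i) :
      IsKey n α (∏ i, X i ^ α i)
  | step (α : Fin n → ℕ) (i j : Fin n) (hij : (i : ℕ) + 1 = (j : ℕ)) (h : α i < α j)
      (f : MvPolynomial (Fin n) ℤ) (hf : IsKey n (α ∘ Equiv.swap i j) f) :
      IsKey n α (demazure n i j f)

/-- The key polynomial κ_α, as a function (via choice from `IsKey`). -/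
noncomputable def keyPoly (n : ℕ) (α : Fin n → ℕ) : MvPolynomial (Fin n) ℤ :=
  if h : ∃ f, IsKey n α f then h.choose else 0

/-- β ≺ α in the pure reverse lexicographic order: at the last index where they
differ, β is smaller. -/
def RevLexLt (n : ℕ) (β α : Fin n → ℕ) : Prop :=
  ∃ i : Fin n, (∀ j : Fin n, i < j → β j = α j) ∧ β i < α i

namespace Module.Basis

variable {ι R M κ : Type*} [Ring R] [AddCommGroup M] [Module R M] [LinearOrder κ]
  (b : Basis ι R M) {p : ι → M} {key : ι → κ}

theorem linearIndependent_of_unitriangular (hkey : Function.Injective key)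
    (hdiag : ∀ i, b.repr (p i) i = 1) (htri : ∀ i j, b.repr (p i) j ≠ 0 → key j ≤ key i) :
    LinearIndependent R p := by
  rw [linearIndependent_iff]
  intro l hl
  by_contra hl0
  obtain ⟨i₀, hi₀, hmax⟩ :=
    l.support.exists_max_image key (Finsupp.support_nonempty_iff.mpr hl0)
  have hrepr : b.repr (Finsupp.linearCombination R p l) i₀ = l i₀ := by
    rw [Finsupp.linearCombination_apply, Finsupp.sum, map_sum, Finsupp.finsetSum_apply,
      Finset.sum_eq_single i₀]
    · simp [hdiag]
    · intro i hi hne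
      have : b.repr (p i) i₀ = 0 := by
        by_contra h
        exact hne (hkey (le_antisymm (hmax i hi) (htri i i₀ h)))
      simp [this]
    · exact fun h => absurd hi₀ h
  rw [hl, map_zero, Finsupp.zero_apply] at hrepr
  exact Finsupp.mem_support_iff.mp hi₀ hrepr.symm

theorem span_eq_top_of_unitriangular [WellFoundedLT κ] (hkey : Function.Injective key)
    (hdiag : ∀ i, b.repr (p i) i = 1) (htri : ∀ i j, b.repr (p i) j ≠ 0 → key j ≤ key i) :
    Submodule.span R (Set.range p) = ⊤ := by
  refine eq_top_iff.mpr (b.span_eq ▸ Submodule.span_le.mpr ?_)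
  rintro _ ⟨i, rfl⟩
  induction i using (InvImage.wf key wellFounded_lt).induction with
  | _ i ih =>
  set s := insert i (b.repr (p i)).support
  have hp : p i = ∑ j ∈ s, b.repr (p i) j • b j := by
    conv_lhs => rw [← b.linearCombination_repr (p i)]
    rw [Finsupp.linearCombination_apply,
      Finsupp.sum_of_support_subset _ (Finset.subset_insert _ _) (fun j r => r • b j)
        fun _ _ => zero_smul R _]
  rw [← Finset.add_sum_erase _ _ (Finset.mem_insert_self _ _), hdiag, one_smul] at hp
  rw [SetLike.mem_coe, eq_sub_of_add_eq hp.symm]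
  refine Submodule.sub_mem _ (Submodule.subset_span ⟨i, rfl⟩)
    (Submodule.sum_mem _ fun j hj => Submodule.smul_mem _ _ (ih j ?_))
  obtain ⟨hji, hj⟩ := Finset.mem_erase.mp hj
  have hrepr : b.repr (p i) j ≠ 0 :=
    Finsupp.mem_support_iff.mp ((Finset.mem_insert.mp hj).resolve_left hji)
  exact (htri i j hrepr).lt_of_ne (hkey.ne hji)

theorem existsUnique_sum_smul_of_unitriangular [hwf : WellFoundedLT κ]
    (hkey : Function.Injective key)
    (hdiag : ∀ i, b.repr (p i) i = 1) (htri : ∀ i j, b.repr (p i) j ≠ 0 → key j ≤ key i)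
    (x : M) : ∃! c : ι →₀ R, x = c.sum fun i r => r • p i := by
  have hx : x ∈ Submodule.span R (Set.range p) :=
    b.span_eq_top_of_unitriangular hkey hdiag htri ▸ Submodule.mem_top
  obtain ⟨c, hc⟩ := Finsupp.mem_span_range_iff_exists_finsupp.mp hx
  refine ⟨c, hc.symm, fun c' hc' => b.linearIndependent_of_unitriangular hkey hdiag htri ?_⟩
  rw [Finsupp.linearCombination_apply, Finsupp.linearCombination_apply, ← hc', hc]

end Module.Basis

theorem revLexLt_iff_toColex_lt {n : ℕ} {β α : Fin n → ℕ} :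
    RevLexLt n β α ↔ toColex β < toColex α :=
  Iff.rfl

theorem Fin.antitone_of_succ_le {n : ℕ} {α : Type*} [Preorder α] {f : Fin n → α}
    (h : ∀ i j : Fin n, (i : ℕ) + 1 = j → f j ≤ f i) : Antitone f := by
  rcases n with _ | n
  · exact fun i => i.elim0
  · exact Fin.antitone_iff_succ_le.mpr fun i => h _ _ (by simp)

theorem MvPolynomial.X_sub_X_dvd_sub_rename_swap {σ R : Type*} [CommRing R] [DecidableEq σ]
    (i j : σ) (f : MvPolynomial σ R) : X i - X j ∣ f - rename (Equiv.swap i j) f := by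
  set I := Ideal.span {(X i - X j : MvPolynomial σ R)}
  have hmem : X i - X j ∈ I := Ideal.subset_span rfl
  suffices h :
      (Ideal.Quotient.mkₐ R I).comp (rename (Equiv.swap i j)) = Ideal.Quotient.mkₐ R I by
    rw [← Ideal.mem_span_singleton, ← Ideal.Quotient.eq]
    exact (AlgHom.congr_fun h f).symm
  refine MvPolynomial.algHom_ext fun k => ?_
  simp only [AlgHom.comp_apply, rename_X, Ideal.Quotient.mkₐ_eq_mk, Ideal.Quotient.eq]
  rcases eq_or_ne k i with rfl | hki
  · rw [Equiv.swap_apply_left, ← neg_sub]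
    exact I.neg_mem hmem
  rcases eq_or_ne k j with rfl | hkj
  · rwa [Equiv.swap_apply_right]
  · rw [Equiv.swap_apply_of_ne_of_ne hki hkj, sub_self]
    exact I.zero_mem

theorem MvPolynomial.monomial_mul_X_pow_mul_X_pow {σ R : Type*} [CommSemiring R] (i j : σ)
    (r : σ →₀ ℕ) (c : R) (p q : ℕ) :
    monomial r c * (X i ^ p * X j ^ q) =
      monomial (r + Finsupp.single i p + Finsupp.single j q) c := by
  simp only [X_pow_eq_monomial, monomial_mul, mul_one, add_assoc]

section Demazure

variable {n : ℕ} {i j : Fin n}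

theorem X_sub_X_mul_ddiff (i j : Fin n) (f : MvPolynomial (Fin n) ℤ) :
    (X i - X j) * ddiff n i j f = f - rename (Equiv.swap i j) f := by
  have h := X_sub_X_dvd_sub_rename_swap i j f
  rw [ddiff, dif_pos h]
  exact h.choose_spec.symm

theorem ddiff_eq_of_X_sub_X_mul_eq (hij : i ≠ j) {f g : MvPolynomial (Fin n) ℤ}
    (h : (X i - X j) * g = f - rename (Equiv.swap i j) f) : ddiff n i j f = g :=
  mul_left_cancel₀ (sub_ne_zero.mpr (X_injective.ne hij)) (by rw [X_sub_X_mul_ddiff, h])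

theorem demazure_finset_sum (hij : i ≠ j) {ι : Type*} (s : Finset ι)
    (f : ι → MvPolynomial (Fin n) ℤ) :
    demazure n i j (∑ k ∈ s, f k) = ∑ k ∈ s, demazure n i j (f k) := by
  refine ddiff_eq_of_X_sub_X_mul_eq hij ?_
  simp only [Finset.mul_sum, map_sum, ← Finset.sum_sub_distrib]
  exact Finset.sum_congr rfl fun k _ => X_sub_X_mul_ddiff i j _

theorem demazure_eq_sum_monomial (hij : i ≠ j) (f : MvPolynomial (Fin n) ℤ) :
    demazure n i j f = ∑ d ∈ f.support, demazure n i j (monomial d (coeff d f)) := by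
  conv_lhs => rw [f.as_sum]
  exact demazure_finset_sum hij _ _

end Demazure

/-- The quotient `(x ^ (a + 1) * y ^ b - x ^ b * y ^ (a + 1)) / (x - y)`, written out. -/
def demazureBinomial {R : Type*} [CommRing R] (a b : ℕ) (x y : R) : R :=
  if b ≤ a then ∑ k ∈ Finset.range (a + 1 - b), x ^ (b + k) * y ^ (a - k)
  else -∑ k ∈ Finset.range (b - a - 1), x ^ (a + 1 + k) * y ^ (b - 1 - k)

theorem sub_mul_demazureBinomial {R : Type*} [CommRing R] (a b : ℕ) (x y : R) :
    (x - y) * demazureBinomial a b x y = x ^ (a + 1) * y ^ b - x ^ b * y ^ (a + 1) := by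
  rw [demazureBinomial]
  split_ifs with hba
  · set N := a + 1 - b
    have hterm : ∀ k ∈ Finset.range N,
        x ^ (b + k) * y ^ (a - k) = x ^ b * y ^ b * (x ^ k * y ^ (N - 1 - k)) := by
      intro k hk
      rw [Finset.mem_range] at hk
      rw [show a - k = b + (N - 1 - k) by omega, pow_add, pow_add]
      ring
    rw [Finset.sum_congr rfl hterm, ← Finset.mul_sum, show a + 1 = b + N by omega]
    linear_combination x ^ b * y ^ b * geom_sum₂_mul x y N
  · set N := b - a - 1
    have hterm : ∀ k ∈ Finset.range N, x ^ (a + 1 + k) * y ^ (b - 1 - k)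
        = x ^ (a + 1) * y ^ (a + 1) * (x ^ k * y ^ (N - 1 - k)) := by
      intro k hk
      rw [Finset.mem_range] at hk
      rw [show b - 1 - k = a + 1 + (N - 1 - k) by omega, pow_add, pow_add]
      ring
    rw [Finset.sum_congr rfl hterm, ← Finset.mul_sum, show b = a + 1 + N by omega]
    linear_combination -(x ^ (a + 1) * y ^ (a + 1)) * geom_sum₂_mul x y N

section DemazureMonomial

variable {n : ℕ} {i j : Fin n}

/-- `γ` lies on the `(i, j)`-string through `β`, between `β` and its swap. -/
def IsDemazureMove (i j : Fin n) (β γ : Fin n → ℕ) : Prop :=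
  (∀ k, k ≠ i → k ≠ j → γ k = β k) ∧ γ i + γ j = β i + β j ∧
    max (γ i) (γ j) ≤ max (β i) (β j)

theorem demazure_monomial (hij : i ≠ j) (d : Fin n →₀ ℕ) (c : ℤ) :
    demazure n i j (monomial d c) =
      monomial ((d.erase i).erase j) c * demazureBinomial (d i) (d j) (X i) (X j) := by
  set r := (d.erase i).erase j
  have hd : d = r + Finsupp.single i (d i) + Finsupp.single j (d j) := by
    ext k
    rcases eq_or_ne k i with rfl | hki
    · simp [r, hij]
    rcases eq_or_ne k j with rfl | hkj
    · simp [r, hij.symm]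
    · simp [r, hki, hkj]
  have hr : Finsupp.mapDomain (Equiv.swap i j) r = r := by
    ext k
    rw [Finsupp.mapDomain_equiv_apply, Equiv.symm_swap]
    rcases eq_or_ne k i with rfl | hki
    · simp [r, hij]
    rcases eq_or_ne k j with rfl | hkj
    · simp [r, hij]
    · rw [Equiv.swap_apply_of_ne_of_ne hki hkj]
  refine ddiff_eq_of_X_sub_X_mul_eq hij ?_
  have hmon : monomial d c = monomial r c * (X i ^ d i * X j ^ d j) := by
    rw [monomial_mul_X_pow_mul_X_pow, ← hd]
  rw [hmon]
  simp only [map_mul, map_pow, rename_X, rename_monomial, Equiv.swap_apply_left,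
    Equiv.swap_apply_right, hr]
  linear_combination monomial r c *
    sub_mul_demazureBinomial (d i) (d j) (X i : MvPolynomial (Fin n) ℤ) (X j)

theorem isDemazureMove_of_mem_support (hij : i ≠ j) {d γ : Fin n →₀ ℕ} {c : ℤ}
    (hγ : γ ∈ (demazure n i j (monomial d c)).support) : IsDemazureMove i j d γ := by
  set r := (d.erase i).erase j
  have mem_term {p q : ℕ} (h : γ ∈ (monomial r c * (X i ^ p * X j ^ q)).support) :
      γ = r + Finsupp.single i p + Finsupp.single j q := by
    rw [monomial_mul_X_pow_mul_X_pow] at h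
    exact Finset.mem_singleton.mp (support_monomial_subset h)
  obtain ⟨p, q, hpq, hmax, rfl⟩ : ∃ p q, p + q = d i + d j ∧ max p q ≤ max (d i) (d j) ∧
      γ = r + Finsupp.single i p + Finsupp.single j q := by
    rw [demazure_monomial hij, demazureBinomial] at hγ
    split_ifs at hγ with hba
    · rw [Finset.mul_sum] at hγ
      obtain ⟨k, hk, hγk⟩ := Finset.mem_biUnion.mp (support_sum hγ)
      rw [Finset.mem_range] at hk
      exact ⟨_, _, by omega, by omega, mem_term hγk⟩
    · rw [mul_neg, support_neg, Finset.mul_sum] at hγ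
      obtain ⟨k, hk, hγk⟩ := Finset.mem_biUnion.mp (support_sum hγ)
      rw [Finset.mem_range] at hk
      exact ⟨_, _, by omega, by omega, mem_term hγk⟩
  refine ⟨fun k hki hkj => ?_, ?_, ?_⟩ <;>
    simp [r, hij.symm, *]

theorem coeff_demazure_monomial_of_swap (hij : i ≠ j) {d γ : Fin n →₀ ℕ} (hlt : d j < d i)
    (hγ : ∀ k, k ≠ i → k ≠ j → γ k = d k) (hγi : γ i = d j) (hγj : γ j = d i) (c : ℤ) :
    coeff γ (demazure n i j (monomial d c)) = c := by
  rw [demazure_monomial hij, demazureBinomial, if_pos hlt.le, Finset.mul_sum, coeff_sum,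
    Finset.sum_eq_single 0]
  · rw [monomial_mul_X_pow_mul_X_pow, coeff_monomial, if_pos]
    ext k
    rcases eq_or_ne k i with rfl | hki
    · simp [hij, hγi]
    rcases eq_or_ne k j with rfl | hkj
    · simp [hij.symm, hγj]
    · simp [hki, hkj, hγ k hki hkj]
  · intro k _ hk
    rw [monomial_mul_X_pow_mul_X_pow, coeff_monomial, if_neg]
    intro h
    have := DFunLike.congr_fun h i
    simp [hij, hγi] at this
    omega
  · intro h
    exact absurd (Finset.mem_range.mpr (by omega)) h

end DemazureMonomial

theorem Finset.sum_add_ite_eq_sum_add_ite {α M : Type*} [DecidableEq α] [AddCommMonoid M]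
    {i j : α} (hij : i ≠ j) {f g : α → M} (hfg : ∀ k, k ≠ i → k ≠ j → f k = g k)
    (S : Finset α) :
    ∑ k ∈ S, f k + (if i ∈ S then g i else 0) + (if j ∈ S then g j else 0) =
      ∑ k ∈ S, g k + (if i ∈ S then f i else 0) + (if j ∈ S then f j else 0) := by
  simp only [← Finset.sum_ite_eq' S i, ← Finset.sum_ite_eq' S j, ← Finset.sum_add_distrib]
  refine Finset.sum_congr rfl fun k _ => ?_
  rcases eq_or_ne k i with rfl | hki
  · simp [hij, add_comm]
  rcases eq_or_ne k j with rfl | hkj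
  · simp [hki, add_comm]
  · simp [hki, hkj, hfg k hki hkj]

theorem IsDemazureMove.exists_sum_le {n : ℕ} {i j : Fin n} {β γ : Fin n → ℕ} (hij : i ≠ j)
    (hmove : IsDemazureMove i j β γ) (S : Finset (Fin n)) :
    ∃ S', (S' = S ∨ S' = S.map (Equiv.swap i j).toEmbedding) ∧ ∑ k ∈ S, γ k ≤ ∑ k ∈ S', β k := by
  have h := Finset.sum_add_ite_eq_sum_add_ite hij hmove.1 S
  have hswap := Finset.sum_add_ite_eq_sum_add_ite hij (f := γ)
    (g := fun k => β (Equiv.swap i j k))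
    (fun k hki hkj => by rw [hmove.1 k hki hkj, Equiv.swap_apply_of_ne_of_ne hki hkj]) S
  simp only [Equiv.swap_apply_left, Equiv.swap_apply_right] at hswap
  have hsum := hmove.2.1
  have hmax := hmove.2.2
  obtain hle | hle : ∑ k ∈ S, γ k ≤ ∑ k ∈ S, β k ∨
      ∑ k ∈ S, γ k ≤ ∑ k ∈ S, β (Equiv.swap i j k) := by
    split_ifs at h hswap <;> omega
  · exact ⟨S, Or.inl rfl, hle⟩
  · exact ⟨_, Or.inr rfl, by rwa [Finset.sum_map]⟩

section Gale

open Finset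

variable {n : ℕ} {i j : Fin n}

def galeCount (S : Finset (Fin n)) (m : ℕ) : ℕ := #(S.filter fun k : Fin n => m ≤ (k : ℕ))

/-- The Gale order on subsets of `Fin n`: `T` arises from `S` by moving elements upwards. -/
def GaleLE (S T : Finset (Fin n)) : Prop := #S = #T ∧ ∀ m, galeCount S m ≤ galeCount T m

def galeSuffix (n m : ℕ) : Finset (Fin n) := univ.filter fun k : Fin n => m ≤ (k : ℕ)

theorem le_of_card_le_galeCount {S : Finset (Fin n)} {m : ℕ} (h : #S ≤ galeCount S m)
    {k : Fin n} (hk : k ∈ S) : m ≤ (k : ℕ) := by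
  rw [← Finset.eq_of_subset_of_card_le (filter_subset _ S) h] at hk
  exact (mem_filter.mp hk).2

theorem galeSuffix_subset_of_card_le_galeCount {T : Finset (Fin n)} {m : ℕ}
    (h : #(galeSuffix n m) ≤ galeCount T m) : galeSuffix n m ⊆ T := by
  have hsub : T.filter (fun k : Fin n => m ≤ (k : ℕ)) ⊆ galeSuffix n m := fun k hk => by
    simpa [galeSuffix] using (mem_filter.mp hk).2
  rw [← Finset.eq_of_subset_of_card_le hsub h]
  exact filter_subset _ T

theorem galeCount_galeSuffix {m m' : ℕ} (h : m' ≤ m) :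
    galeCount (galeSuffix n m) m' = #(galeSuffix n m) := by
  rw [galeCount, filter_true_of_mem fun k hk => h.trans (by simpa [galeSuffix] using hk)]

theorem eq_galeSuffix_of_galeLE {m : ℕ} {T : Finset (Fin n)} (h : GaleLE (galeSuffix n m) T) :
    T = galeSuffix n m := by
  have hsub :=
    galeSuffix_subset_of_card_le_galeCount ((galeCount_galeSuffix le_rfl).symm ▸ h.2 m)
  exact (Finset.eq_of_subset_of_card_le hsub h.1.ge).symm

theorem galeCount_insert {S : Finset (Fin n)} {a : Fin n} (ha : a ∉ S) (m : ℕ) :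
    galeCount (insert a S) m = galeCount S m + if m ≤ (a : ℕ) then 1 else 0 := by
  rw [galeCount, galeCount, filter_insert]
  split_ifs with h
  · exact card_insert_of_notMem fun h' => ha (mem_filter.mp h').1
  · rfl

theorem notMem_galeSuffix_succ (k : Fin n) : k ∉ galeSuffix n (k + 1) := by
  simp [galeSuffix]

theorem galeSuffix_eq_insert (k : Fin n) :
    galeSuffix n k = insert k (galeSuffix n (k + 1)) := by
  ext l
  simp only [galeSuffix, mem_insert, mem_filter, mem_univ, true_and, Fin.ext_iff]
  omega

theorem galeCount_eq_add (S : Finset (Fin n)) (k : Fin n) :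
    galeCount S k = galeCount S (k + 1) + if k ∈ S then 1 else 0 := by
  simp only [galeCount, card_filter, ← Finset.sum_ite_eq' S k (fun _ => (1 : ℕ)),
    ← Finset.sum_add_distrib]
  refine Finset.sum_congr rfl fun l _ => ?_
  simp only [Fin.ext_iff]
  split_ifs <;> omega

theorem galeCount_map_swap (hij : (i : ℕ) + 1 = j) (S : Finset (Fin n)) (m : ℕ) :
    galeCount (S.map (Equiv.swap i j).toEmbedding) m + (if m = j ∧ j ∈ S then 1 else 0) =
      galeCount S m + (if m = j ∧ i ∈ S then 1 else 0) := by
  have hij' : i ≠ j := Fin.ne_of_val_ne (by omega)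
  have h := Finset.sum_add_ite_eq_sum_add_ite hij'
    (f := fun k => if m ≤ (Equiv.swap i j k : ℕ) then 1 else 0)
    (g := fun k => if m ≤ (k : ℕ) then 1 else 0)
    (fun k hki hkj => by simp [Equiv.swap_apply_of_ne_of_ne hki hkj]) S
  simp only [galeCount, card_filter, sum_map, Equiv.coe_toEmbedding] at h ⊢
  simp only [Equiv.swap_apply_left, Equiv.swap_apply_right] at h
  simp only [ite_and]
  split_ifs at h ⊢ <;> omega

theorem galeCount_of_eq_or_eq_map_swap (hij : (i : ℕ) + 1 = j) {S S' : Finset (Fin n)}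
    (hS' : S' = S ∨ S' = S.map (Equiv.swap i j).toEmbedding) :
    #S' = #S ∧ (∀ m : ℕ, m ≠ j → galeCount S' m = galeCount S m) ∧
      galeCount S j ≤ galeCount S' j + 1 := by
  rcases hS' with rfl | rfl
  · exact ⟨rfl, fun _ _ => rfl, Nat.le_succ _⟩
  · refine ⟨card_map _, fun m hm => ?_, ?_⟩ <;>
      [have := galeCount_map_swap hij S m; have := galeCount_map_swap hij S j] <;>
      split_ifs at this <;> omega

theorem galeLE_map_swap (hij : (i : ℕ) + 1 = j) {S S' T : Finset (Fin n)}
    (hS' : S' = S ∨ S' = S.map (Equiv.swap i j).toEmbedding) (hT : GaleLE S' T)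
    (hiT : i ∈ T) (hjT : j ∉ T) : GaleLE S (T.map (Equiv.swap i j).toEmbedding) := by
  obtain ⟨hcard, hcount, hcount_j⟩ := galeCount_of_eq_or_eq_map_swap hij hS'
  refine ⟨by rw [card_map, ← hT.1, hcard], fun m => ?_⟩
  have hTm := galeCount_map_swap hij T m
  have := hT.2 m
  simp only [hiT, hjT, and_true, and_false, if_false] at hTm
  by_cases hm : m = j
  · subst hm
    simp only [if_true] at hTm
    omega
  · have := hcount m hm
    simp only [hm, if_false] at hTm
    omega

theorem galeLE_of_galeLE_swap (hij : (i : ℕ) + 1 = j) {S S' T : Finset (Fin n)}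
    (hS' : S' = S ∨ S' = S.map (Equiv.swap i j).toEmbedding) (hT : GaleLE S' T)
    (hijT : i ∈ T → j ∈ T) : GaleLE S T := by
  obtain ⟨hcard, hcount, hcount_j⟩ := galeCount_of_eq_or_eq_map_swap hij hS'
  refine ⟨hcard.symm.trans hT.1, fun m => ?_⟩
  by_cases hm : m = j
  swap
  · exact (hcount m hm).ge.trans (hT.2 m)
  -- A deficit at threshold `j` would force `i ∈ T` and `j ∉ T`.
  subst hm
  have hSi := galeCount_eq_add S i
  have hTi := galeCount_eq_add T i
  rw [hij] at hSi hTi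
  have hSj := galeCount_eq_add S j
  have hTj := galeCount_eq_add T j
  have := hcount i (by omega)
  have := hcount ((j : ℕ) + 1) (by omega)
  have := hT.2 i
  have := hT.2 ((j : ℕ) + 1)
  by_cases hiT : i ∈ T
  · simp only [hiT, hijT hiT, if_true] at hTi hTj
    split_ifs at hSi hSj <;> omega
  · simp only [hiT, if_false] at hTi
    split_ifs at hSi hSj hTj <;> omega

theorem sum_comp_swap_le {δ : Fin n → ℕ} (hij : i ≠ j) (hδ : δ i < δ j) {T : Finset (Fin n)}
    (hijT : i ∈ T → j ∈ T) : ∑ k ∈ T, δ (Equiv.swap i j k) ≤ ∑ k ∈ T, δ k := by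
  have h := Finset.sum_add_ite_eq_sum_add_ite hij (f := fun k => δ (Equiv.swap i j k)) (g := δ)
    (fun k hki hkj => by rw [Equiv.swap_apply_of_ne_of_ne hki hkj]) T
  simp only [Equiv.swap_apply_left, Equiv.swap_apply_right] at h
  by_cases hiT : i ∈ T
  · simp only [hiT, hijT hiT, if_true] at h
    omega
  · simp only [hiT, if_false] at h
    split_ifs at h <;> omega

theorem exists_galeLE_of_swap {δ : Fin n → ℕ} (hij : (i : ℕ) + 1 = j) (hδ : δ i < δ j)
    {S S' T : Finset (Fin n)} (hS' : S' = S ∨ S' = S.map (Equiv.swap i j).toEmbedding)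
    (hT : GaleLE S' T) : ∃ U, GaleLE S U ∧ ∑ k ∈ T, δ (Equiv.swap i j k) ≤ ∑ k ∈ U, δ k := by
  by_cases hijT : i ∈ T → j ∈ T
  · exact ⟨T, galeLE_of_galeLE_swap hij hS' hT hijT,
      sum_comp_swap_le (Fin.ne_of_val_ne (by omega)) hδ hijT⟩
  · obtain ⟨hiT, hjT⟩ := Classical.not_imp.mp hijT
    exact ⟨_, galeLE_map_swap hij hS' hT hiT hjT,
      (sum_map T (Equiv.swap i j).toEmbedding δ).ge⟩

theorem eq_insert_of_galeLE_insert_galeSuffix (hij : (i : ℕ) + 1 = j) {T : Finset (Fin n)}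
    (h : GaleLE (insert i (galeSuffix n (j + 1))) T) :
    ∃ t, (t = i ∨ t = j) ∧ T = insert t (galeSuffix n (j + 1)) := by
  set R := galeSuffix n (j + 1)
  have hiR : i ∉ R := by simp [R, galeSuffix]; omega
  have hcard : #T = #R + 1 := by rw [← h.1, card_insert_of_notMem hiR]
  have hRT : R ⊆ T := by
    refine galeSuffix_subset_of_card_le_galeCount (le_trans (le_of_eq ?_) (h.2 (j + 1)))
    rw [galeCount_insert hiR, if_neg (by omega), galeCount_galeSuffix le_rfl, add_zero]
  have hTi : #T ≤ galeCount T i := by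
    refine le_trans (le_of_eq ?_) (h.2 i)
    rw [galeCount_insert hiR, if_pos le_rfl, galeCount_galeSuffix (by omega), hcard]
  obtain ⟨t, ht⟩ := card_eq_one.mp (show #(T \ R) = 1 by rw [card_sdiff_of_subset hRT]; omega)
  have htT : t ∈ T ∧ t ∉ R := mem_sdiff.mp (ht ▸ mem_singleton_self t)
  refine ⟨t, ?_, ?_⟩
  · have hit := le_of_card_le_galeCount hTi htT.1
    have htj : (t : ℕ) < j + 1 := by simpa [R, galeSuffix] using htT.2
    rcases (show (t : ℕ) = i ∨ (t : ℕ) = j by omega) with h | h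
    exacts [Or.inl (Fin.ext h), Or.inr (Fin.ext h)]
  · rw [← sdiff_union_of_subset hRT, ht, insert_eq]

def GaleBounded (δ β : Fin n → ℕ) : Prop :=
  ∀ S : Finset (Fin n), ∃ T, GaleLE S T ∧ ∑ k ∈ S, β k ≤ ∑ k ∈ T, δ k

namespace GaleBounded

variable {δ β γ : Fin n → ℕ}

theorem refl (δ : Fin n → ℕ) : GaleBounded δ δ :=
  fun S => ⟨S, ⟨rfl, fun _ => le_rfl⟩, le_rfl⟩

theorem sum_galeSuffix_le (h : GaleBounded δ β) (m : ℕ) :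
    ∑ k ∈ galeSuffix n m, β k ≤ ∑ k ∈ galeSuffix n m, δ k := by
  obtain ⟨T, hT, hle⟩ := h (galeSuffix n m)
  rwa [eq_galeSuffix_of_galeLE hT] at hle

theorem toColex_le (h : GaleBounded δ β) : toColex β ≤ toColex δ := by
  refine not_lt.mp fun hδβ => ?_
  obtain ⟨m, hagree, hlt⟩ : RevLexLt n δ β := hδβ
  have hsum := h.sum_galeSuffix_le m
  rw [galeSuffix_eq_insert, sum_insert (notMem_galeSuffix_succ m),
    sum_insert (notMem_galeSuffix_succ m)] at hsum
  have htail : ∑ k ∈ galeSuffix n (m + 1), β k = ∑ k ∈ galeSuffix n (m + 1), δ k :=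
    sum_congr rfl fun k hk => (hagree k (mem_filter.mp hk).2).symm
  omega

theorem add_sum_galeSuffix_le_max (h : GaleBounded δ β) (hij : (i : ℕ) + 1 = j) :
    β i + ∑ k ∈ galeSuffix n (j + 1), β k ≤
      max (δ i) (δ j) + ∑ k ∈ galeSuffix n (j + 1), δ k := by
  have hiR : i ∉ galeSuffix n (j + 1) := by simp [galeSuffix]; omega
  obtain ⟨T, hT, hle⟩ := h (insert i (galeSuffix n (j + 1)))
  obtain ⟨t, ht, rfl⟩ := eq_insert_of_galeLE_insert_galeSuffix hij hT
  have htR : t ∉ galeSuffix n (j + 1) := by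
    rcases ht with rfl | rfl
    exacts [hiR, notMem_galeSuffix_succ t]
  have hδt : δ t ≤ max (δ i) (δ j) := by
    rcases ht with rfl | rfl
    exacts [le_max_left _ _, le_max_right _ _]
  rw [sum_insert hiR, sum_insert htR] at hle
  omega

theorem eq_comp_swap_of_isDemazureMove (hij : (i : ℕ) + 1 = j) (hδ : δ i < δ j)
    (h : GaleBounded (δ ∘ Equiv.swap i j) β) (hmove : IsDemazureMove i j β δ) :
    β = δ ∘ Equiv.swap i j := by
  have hij' : i ≠ j := Fin.ne_of_val_ne (by omega)
  have hoff : ∀ k, k ≠ i → k ≠ j → β k = (δ ∘ Equiv.swap i j) k := fun k hki hkj => by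
    simp [← hmove.1 k hki hkj, Equiv.swap_apply_of_ne_of_ne hki hkj]
  have htail : ∑ k ∈ galeSuffix n (j + 1), β k =
      ∑ k ∈ galeSuffix n (j + 1), (δ ∘ Equiv.swap i j) k := by
    refine sum_congr rfl fun k hk => hoff k ?_ ?_ <;> rintro rfl <;> simp [galeSuffix] at hk
    omega
  have hj := h.sum_galeSuffix_le j
  rw [galeSuffix_eq_insert, sum_insert (notMem_galeSuffix_succ j),
    sum_insert (notMem_galeSuffix_succ j)] at hj
  have hi := h.add_sum_galeSuffix_le_max hij
  simp only [Function.comp_apply, Equiv.swap_apply_left, Equiv.swap_apply_right] at hi hj htail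
  have hsum := hmove.2.1
  funext k
  rcases eq_or_ne k i with rfl | hki
  · simp only [Function.comp_apply, Equiv.swap_apply_left]
    omega
  rcases eq_or_ne k j with rfl | hkj
  · simp only [Function.comp_apply, Equiv.swap_apply_right]
    omega
  · exact hoff k hki hkj

theorem of_isDemazureMove (hij : (i : ℕ) + 1 = j) (hδ : δ i < δ j)
    (h : GaleBounded (δ ∘ Equiv.swap i j) β) (hmove : IsDemazureMove i j β γ) :
    GaleBounded δ γ := by
  intro S
  obtain ⟨S', hS', hγS'⟩ := hmove.exists_sum_le (Fin.ne_of_val_ne (by omega)) S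
  obtain ⟨T, hT, hβT⟩ := h S'
  obtain ⟨U, hU, hTU⟩ := exists_galeLE_of_swap hij hδ hS' hT
  exact ⟨U, hU, hγS'.trans (hβT.trans hTU)⟩

end GaleBounded

end Gale

theorem MvPolynomial.monomial_equivFunOnFinite_symm {σ R : Type*} [Fintype σ] [CommSemiring R]
    (α : σ → ℕ) : monomial (Finsupp.equivFunOnFinite.symm α) (1 : R) = ∏ i, X i ^ α i := by
  rw [monomial_eq, C_1, one_mul, Finsupp.prod_fintype _ _ fun _ => pow_zero _]
  rfl

namespace IsKey

variable {n : ℕ} {α : Fin n → ℕ} {f : MvPolynomial (Fin n) ℤ}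

theorem galeBounded (hf : IsKey n α f) {d : Fin n →₀ ℕ} (hd : d ∈ f.support) :
    GaleBounded α d := by
  induction hf generalizing d with
  | decreasing α _ =>
    rw [← monomial_equivFunOnFinite_symm] at hd
    rw [Finset.mem_singleton.mp (support_monomial_subset hd)]
    exact GaleBounded.refl α
  | step α i j hij hlt f _ ih =>
    have hij' : i ≠ j := Fin.ne_of_val_ne (by omega)
    rw [demazure_eq_sum_monomial hij'] at hd
    obtain ⟨e, he, hde⟩ := Finset.mem_biUnion.mp (support_sum hd)
    exact (ih he).of_isDemazureMove hij hlt (isDemazureMove_of_mem_support hij' hde)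

theorem coeff_self (hf : IsKey n α f) : coeff (Finsupp.equivFunOnFinite.symm α) f = 1 := by
  induction hf with
  | decreasing α _ => rw [← monomial_equivFunOnFinite_symm, coeff_monomial, if_pos rfl]
  | step α i j hij hlt f hf ih =>
    have hij' : i ≠ j := Fin.ne_of_val_ne (by omega)
    set e₀ := Finsupp.equivFunOnFinite.symm (α ∘ Equiv.swap i j)
    have he₀ : e₀ ∈ f.support := mem_support_iff.mpr (ih ▸ one_ne_zero)
    rw [demazure_eq_sum_monomial hij', coeff_sum, Finset.sum_eq_single_of_mem e₀ he₀, ih]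
    · refine coeff_demazure_monomial_of_swap hij' ?_ (fun k hki hkj => ?_) ?_ ?_ 1 <;>
        simp [e₀, Equiv.swap_apply_of_ne_of_ne, *]
    · intro e he hne
      by_contra hc
      have hmove := isDemazureMove_of_mem_support hij' (mem_support_iff.mpr hc)
      have := (hf.galeBounded he).eq_comp_swap_of_isDemazureMove hij hlt hmove
      exact hne (Finsupp.ext fun k => congrFun this k)

end IsKey

theorem exists_isKey {n : ℕ} (α : Fin n → ℕ) : ∃ f, IsKey n α f := by
  induction α using (InvImage.wf (toColex : (Fin n → ℕ) → Colex (Fin n → ℕ))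
    wellFounded_lt).induction with
  | _ α ih =>
  by_cases hasc : ∃ i j : Fin n, (i : ℕ) + 1 = j ∧ α i < α j
  · obtain ⟨i, j, hij, hlt⟩ := hasc
    obtain ⟨f, hf⟩ := ih _ (Pi.colex_asc (Fin.le_def.mpr (by omega)) hlt)
    exact ⟨_, .step α i j hij hlt f hf⟩
  · simp only [not_exists, not_and, not_lt] at hasc
    exact ⟨_, .decreasing α fun i j hij => Fin.antitone_of_succ_le hasc hij⟩

theorem isKey_keyPoly {n : ℕ} (α : Fin n → ℕ) : IsKey n α (keyPoly n α) := by
  rw [keyPoly, dif_pos (exists_isKey α)]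
  exact (exists_isKey α).choose_spec

/-- the leading monomial of κ_α with respect to the pure reverse
lexicographic order is x^α with coefficient 1, and consequently the key polynomials
form a ℤ-basis of ℤ[x_1,...,x_n]: every polynomial is a unique finite ℤ-linear
combination of the κ_α. -/
theorem key_leading_term_and_basis (n : ℕ) :
    (∀ α : Fin n → ℕ,
      coeff (Finsupp.equivFunOnFinite.symm α) (keyPoly n α) = 1 ∧
      ∀ β : Fin n → ℕ,
        coeff (Finsupp.equivFunOnFinite.symm β) (keyPoly n α) ≠ 0 →
          β = α ∨ RevLexLt n β α) ∧
    (∀ g : MvPolynomial (Fin n) ℤ,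
      ∃! c : (Fin n → ℕ) →₀ ℤ, g = c.sum fun α z => z • keyPoly n α) := by
  have hcoeff (α : Fin n → ℕ) := (isKey_keyPoly α).coeff_self
  have hlower (α β : Fin n → ℕ)
      (hβ : coeff (Finsupp.equivFunOnFinite.symm β) (keyPoly n α) ≠ 0) :
      toColex β ≤ toColex α :=
    ((isKey_keyPoly α).galeBounded (mem_support_iff.mpr hβ)).toColex_le
  let b := (basisMonomials (Fin n) ℤ).reindex Finsupp.equivFunOnFinite
  refine ⟨fun α => ⟨hcoeff α, fun β hβ => ?_⟩, fun g => ?_⟩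
  · exact (hlower α β hβ).eq_or_lt.imp (toColex.injective ·) revLexLt_iff_toColex_lt.mpr
  -- instance search does not find this for the `<` of `Colex.linearOrder`
  · exact b.existsUnique_sum_smul_of_unitriangular (hwf := Pi.Colex.wellFoundedLT)
      toColex.injective hcoeff hlower g
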